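/- arXiv:1601.05702 — 2 statements merged into one kernel-verified Lean document; each statement's English description precedes it below -/
import Mathlib

section
/- Let θ = (γ, μ, σ) with σ > 0 and let x ∈ ℝ satisfy 1 + γz > 0, where z = (x − μ)/σ and u = u_γ(z). Then the γ-score ∂_γ ℓ_θ(x) = (1 − u) D(γ, z) − z/(1 + γz), with D(γ, z) = ∫₀^z t/(1 + γt)² dt, satisfies: (i) if γ ≥ 0 and z ≥ 0, |∂_γ ℓ_θ(x)| ≤ max{ min(z²/2, γ^{−2} log(1 + γz)), min(z, γ^{−1}) }, where γ^{−2} log(1 + γz) and γ^{−1} are interpreted as +∞ when γ = 0; (ii) if γ ≤ 0 and z ≥ 0, |∂_γ ℓ_θ(x)| ≤ max(z², z)/(1 + γz); (iii) if γ ≥ 0 and z ≤ 0, |∂_γ ℓ_θ(x)| ≤ u^{1+γ} max{(log u)², log u}; (iv) if γ ≤ 0 and z ≤ 0, |∂_γ ℓ_θ(x)| ≤ u · max{(log u)², log u}. -/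
/-!
Write `w = 1 + γz` and `ℓ = log w`. The fundamental theorem of calculus gives
`γ² D = ℓ + w⁻¹ - 1 = e^{-ℓ} - 1 + ℓ`, and `γ log u = -ℓ`, so every bound on `D` is a
second-order Taylor bound for `exp` at `-ℓ`: `e^a - 1 - a ≤ a²/2` for `a ≤ 0` and
`e^a - 1 - a ≤ a²/2 · e^a` for `a ≥ 0`. The bounds `1 - w⁻¹ ≤ ℓ ≤ w - 1` place `log u` between
`-z` and `-z/w`; hence `u ≤ 1` when `z ≥ 0` and `u ≥ 1` when `z ≤ 0`, so the two terms
`(1 - u) D` and `z / w` of the score have the same sign and the absolute value of their difference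
is at most the larger one.
-/

/-- `u_γ(z)` for the GEV family: `(1 + γz)^(−1/γ)` for `γ ≠ 0` and `e^(−z)` for `γ = 0`. -/
noncomputable def gevU (γ z : ℝ) : ℝ :=
  if γ = 0 then Real.exp (-z) else (1 + γ * z) ^ (-γ⁻¹)

/-- `D(γ, z) = ∫₀^z t / (1 + γ t)² dt`, the partial derivative `∂_γ log u_γ(z)`. -/
noncomputable def gevDGamma (γ z : ℝ) : ℝ := ∫ t in (0:ℝ)..z, t / (1 + γ * t) ^ 2

/-- The γ-score of the GEV log-density:
`∂_γ ℓ_θ(x) = (1 − u) D(γ, z) − z/(1 + γz)`, where `z = (x − μ)/σ`, `u = u_γ(z)`. -/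
noncomputable def gevScoreGamma (γ μ σ : ℝ) (x : ℝ) : ℝ :=
  (1 - gevU γ ((x - μ) / σ)) * gevDGamma γ ((x - μ) / σ)
    - ((x - μ) / σ) / (1 + γ * ((x - μ) / σ))

open Real Set

theorem Real.exp_sub_one_sub_le_sq_div_two {x : ℝ} (hx : x ≤ 0) :
    exp x - 1 - x ≤ x ^ 2 / 2 := by
  -- `exp (-x) ≥ 1 - x + x²/2` and `(1 + x + x²/2) (1 - x + x²/2) = 1 + x⁴/4 ≥ 1`
  have hexp := quadratic_le_exp_of_nonneg (neg_nonneg.2 hx)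
  have hprod : exp x * exp (-x) = 1 := by rw [← exp_add, add_neg_cancel, exp_zero]
  nlinarith [exp_pos x, pow_two_nonneg (x ^ 2), sq_nonneg (x - 1)]

theorem Real.exp_sub_one_sub_le_sq_div_two_mul_exp {x : ℝ} (hx : 0 ≤ x) :
    exp x - 1 - x ≤ x ^ 2 / 2 * exp x := by
  have hderiv (t : ℝ) : HasDerivAt (fun t ↦ t ^ 2 / 2 - 1 + (1 + t) * exp (-t))
      (t * (1 - exp (-t))) t := by
    refine ((((hasDerivAt_pow 2 t).div_const 2).sub_const 1).add
      (((hasDerivAt_id t).const_add 1).mul (hasDerivAt_neg t).exp)).congr_deriv ?_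
    simp only [id]
    ring
  have hmono := monotone_of_hasDerivAt_nonneg hderiv fun t ↦ by
    rcases le_total 0 t with ht | ht
    · exact mul_nonneg ht (sub_nonneg.2 (exp_le_one_iff.2 (by linarith)))
    · exact mul_nonneg_of_nonpos_of_nonpos ht (sub_nonpos.2 (one_le_exp (by linarith)))
  have h0 : 0 ≤ x ^ 2 / 2 - 1 + (1 + x) * exp (-x) := by simpa using hmono hx
  have hprod : exp x * exp (-x) = 1 := by rw [← exp_add, add_neg_cancel, exp_zero]
  nlinarith [mul_le_mul_of_nonneg_left h0 (exp_pos x).le]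

section

variable {γ z : ℝ}

theorem one_add_mul_pos_of_mem_uIcc (h : 0 < 1 + γ * z) {t : ℝ} (ht : t ∈ uIcc 0 z) :
    0 < 1 + γ * t := by
  rcases le_total 0 z with hz | hz
  · rw [uIcc_of_le hz] at ht
    rcases le_total 0 γ with hγ | hγ <;> nlinarith [ht.1, ht.2]
  · rw [uIcc_of_ge hz] at ht
    rcases le_total 0 γ with hγ | hγ <;> nlinarith [ht.1, ht.2]

theorem gevDGamma_zero_left (z : ℝ) : gevDGamma 0 z = z ^ 2 / 2 := by
  simp [gevDGamma, integral_id]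

theorem gevDGamma_nonneg (γ z : ℝ) : 0 ≤ gevDGamma γ z := by
  rcases le_total 0 z with hz | hz
  · exact intervalIntegral.integral_nonneg hz fun t ht ↦ div_nonneg ht.1 (sq_nonneg _)
  · rw [gevDGamma, intervalIntegral.integral_symm, ← intervalIntegral.integral_neg]
    exact intervalIntegral.integral_nonneg hz fun t ht ↦
      neg_nonneg.2 (div_nonpos_of_nonpos_of_nonneg ht.2 (sq_nonneg _))

theorem sq_mul_gevDGamma (h : 0 < 1 + γ * z) :
    γ ^ 2 * gevDGamma γ z = log (1 + γ * z) + (1 + γ * z)⁻¹ - 1 := by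
  have hpos (t) (ht : t ∈ uIcc 0 z) := one_add_mul_pos_of_mem_uIcc h ht
  have hderiv : ∀ t ∈ uIcc 0 z, HasDerivAt (fun s ↦ log (1 + γ * s) + (1 + γ * s)⁻¹)
      (γ ^ 2 * (t / (1 + γ * t) ^ 2)) t := by
    intro t ht
    have hlin : HasDerivAt (fun s ↦ 1 + γ * s) γ t := by
      simpa using ((hasDerivAt_id t).const_mul γ).const_add 1
    refine ((hlin.log (hpos t ht).ne').add (hlin.inv (hpos t ht).ne')).congr_deriv ?_
    have := (hpos t ht).ne'
    field_simp
    ring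
  have hcont : ContinuousOn (fun t ↦ γ ^ 2 * (t / (1 + γ * t) ^ 2)) (uIcc 0 z) :=
    continuousOn_const.mul (continuousOn_id.div (by fun_prop)
      fun t ht ↦ pow_ne_zero 2 (hpos t ht).ne')
  rw [gevDGamma, ← intervalIntegral.integral_const_mul,
    intervalIntegral.integral_eq_sub_of_hasDerivAt hderiv hcont.intervalIntegrable]
  simp

theorem gevU_pos (h : 0 < 1 + γ * z) : 0 < gevU γ z := by
  unfold gevU
  split_ifs
  exacts [exp_pos _, rpow_pos_of_pos h _]

theorem log_gevU_zero_left (z : ℝ) : log (gevU 0 z) = -z := by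
  simp [gevU]

theorem mul_log_gevU (h : 0 < 1 + γ * z) : γ * log (gevU γ z) = -log (1 + γ * z) := by
  by_cases hγ : γ = 0
  · simp [hγ]
  rw [gevU, if_neg hγ, log_rpow h]
  field_simp

theorem gevU_rpow_self (h : 0 < 1 + γ * z) : gevU γ z ^ γ = (1 + γ * z)⁻¹ := by
  by_cases hγ : γ = 0
  · simp [hγ]
  rw [gevU, if_neg hγ, ← rpow_mul h.le, neg_mul, inv_mul_cancel₀ hγ, rpow_neg_one]

theorem log_gevU_mem_Icc_of_nonneg (hγ : 0 ≤ γ) (h : 0 < 1 + γ * z) :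
    log (gevU γ z) ∈ Icc (-z) (-z / (1 + γ * z)) := by
  rcases hγ.eq_or_lt with rfl | hγ
  · simp [log_gevU_zero_left]
  have hmul := mul_log_gevU h
  have hdiv : γ * (-z / (1 + γ * z)) = (1 + γ * z)⁻¹ - 1 := by
    field_simp
    ring
  constructor
  · refine le_of_mul_le_mul_left ?_ hγ
    linarith [log_le_sub_one_of_pos h]
  · refine le_of_mul_le_mul_left ?_ hγ
    linarith [one_sub_inv_le_log_of_pos h]

theorem log_gevU_mem_Icc_of_nonpos (hγ : γ ≤ 0) (h : 0 < 1 + γ * z) :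
    log (gevU γ z) ∈ Icc (-z / (1 + γ * z)) (-z) := by
  rcases hγ.eq_or_lt with rfl | hγ
  · simp [log_gevU_zero_left]
  have hmul := mul_log_gevU h
  have hdiv : γ * (-z / (1 + γ * z)) = (1 + γ * z)⁻¹ - 1 := by
    field_simp
    ring
  constructor
  · refine (mul_le_mul_left_of_neg hγ).1 ?_
    linarith [one_sub_inv_le_log_of_pos h]
  · refine (mul_le_mul_left_of_neg hγ).1 ?_
    linarith [log_le_sub_one_of_pos h]

theorem gevU_le_one (h : 0 < 1 + γ * z) (hz : 0 ≤ z) : gevU γ z ≤ 1 := by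
  refine (log_nonpos_iff (gevU_pos h).le).1 ?_
  rcases le_total 0 γ with hγ | hγ
  · exact (log_gevU_mem_Icc_of_nonneg hγ h).2.trans
      (div_nonpos_of_nonpos_of_nonneg (neg_nonpos.2 hz) h.le)
  · exact (log_gevU_mem_Icc_of_nonpos hγ h).2.trans (neg_nonpos.2 hz)

theorem one_le_gevU (h : 0 < 1 + γ * z) (hz : z ≤ 0) : 1 ≤ gevU γ z := by
  refine (log_nonneg_iff (gevU_pos h)).1 ?_
  rcases le_total 0 γ with hγ | hγ
  · exact (neg_nonneg.2 hz).trans (log_gevU_mem_Icc_of_nonneg hγ h).1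
  · exact (div_nonneg (neg_nonneg.2 hz) h.le).trans (log_gevU_mem_Icc_of_nonpos hγ h).1

theorem gevDGamma_le_log_gevU_sq (hγz : 0 ≤ γ * z) :
    gevDGamma γ z ≤ log (gevU γ z) ^ 2 / 2 := by
  rcases eq_or_ne γ 0 with rfl | hγ
  · simp [gevDGamma_zero_left, log_gevU_zero_left]
  have hw : 1 ≤ 1 + γ * z := by linarith
  have h : 0 < 1 + γ * z := by linarith
  have hE := exp_sub_one_sub_le_sq_div_two (neg_nonpos.2 (log_nonneg hw))
  rw [exp_neg, exp_log h] at hE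
  refine le_of_mul_le_mul_left (a := γ ^ 2) ?_ (by positivity)
  rw [sq_mul_gevDGamma h,
    show γ ^ 2 * (log (gevU γ z) ^ 2 / 2) = (γ * log (gevU γ z)) ^ 2 / 2 by ring, mul_log_gevU h]
  linarith

theorem gevDGamma_le_log_gevU_sq_mul_inv (h : 0 < 1 + γ * z) (hγz : γ * z ≤ 0) :
    gevDGamma γ z ≤ log (gevU γ z) ^ 2 / 2 * (1 + γ * z)⁻¹ := by
  rcases eq_or_ne γ 0 with rfl | hγ
  · simp [gevDGamma_zero_left, log_gevU_zero_left]
  have hE := exp_sub_one_sub_le_sq_div_two_mul_exp (neg_nonneg.2 (log_nonpos h.le (by linarith)))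
  rw [exp_neg, exp_log h] at hE
  refine le_of_mul_le_mul_left (a := γ ^ 2) ?_ (by positivity)
  rw [sq_mul_gevDGamma h, show γ ^ 2 * (log (gevU γ z) ^ 2 / 2 * (1 + γ * z)⁻¹) =
    (γ * log (gevU γ z)) ^ 2 / 2 * (1 + γ * z)⁻¹ by ring, mul_log_gevU h]
  linarith

theorem gevDGamma_le_sq_div (h : 0 < 1 + γ * z) : gevDGamma γ z ≤ z ^ 2 / (1 + γ * z) := by
  rcases eq_or_ne γ 0 with rfl | hγ
  · rw [gevDGamma_zero_left, zero_mul, add_zero, div_one]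
    linarith [sq_nonneg z]
  refine le_of_mul_le_mul_left (a := γ ^ 2) ?_ (by positivity)
  have hsq : γ ^ 2 * (z ^ 2 / (1 + γ * z)) = (1 + γ * z - 1) + (1 + γ * z)⁻¹ - 1 := by
    field_simp
    ring
  rw [sq_mul_gevDGamma h, hsq]
  linarith [log_le_sub_one_of_pos h]

theorem gevDGamma_le_sq_div_two (hγ : 0 ≤ γ) (hz : 0 ≤ z) : gevDGamma γ z ≤ z ^ 2 / 2 := by
  have h : 0 < 1 + γ * z := by nlinarith
  obtain ⟨hlo, hhi⟩ := log_gevU_mem_Icc_of_nonneg hγ h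
  have hL : log (gevU γ z) ^ 2 ≤ z ^ 2 :=
    sq_le_sq' hlo (hhi.trans ((div_nonpos_of_nonpos_of_nonneg (neg_nonpos.2 hz) h.le).trans hz))
  linarith [gevDGamma_le_log_gevU_sq (mul_nonneg hγ hz)]

theorem gevDGamma_le_inv_sq_mul_log (hγ : γ ≠ 0) (hγz : 0 ≤ γ * z) :
    gevDGamma γ z ≤ γ⁻¹ ^ 2 * log (1 + γ * z) := by
  have h : 0 < 1 + γ * z := by linarith
  refine le_of_mul_le_mul_left (a := γ ^ 2) ?_ (by positivity)
  rw [sq_mul_gevDGamma h, ← mul_assoc, ← mul_pow, mul_inv_cancel₀ hγ, one_pow, one_mul]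
  linarith [inv_le_one_of_one_le₀ (by linarith : (1 : ℝ) ≤ 1 + γ * z)]

noncomputable def gevScoreGammaStd (γ z : ℝ) : ℝ :=
  (1 - gevU γ z) * gevDGamma γ z - z / (1 + γ * z)

theorem gevScoreGamma_eq_gevScoreGammaStd (γ μ σ x : ℝ) :
    gevScoreGamma γ μ σ x = gevScoreGammaStd γ ((x - μ) / σ) :=
  rfl

theorem abs_gevScoreGammaStd_le_max (h : 0 < 1 + γ * z) (hz : 0 ≤ z) :
    |gevScoreGammaStd γ z| ≤ max (gevDGamma γ z) (z / (1 + γ * z)) := by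
  have hD := gevDGamma_nonneg γ z
  refine abs_sub_le_of_nonneg_of_le (mul_nonneg (sub_nonneg.2 (gevU_le_one h hz)) hD)
    ((mul_le_of_le_one_left hD ?_).trans (le_max_left _ _)) (div_nonneg hz h.le) (le_max_right _ _)
  linarith [gevU_pos h]

theorem abs_gevScoreGammaStd_le_of_nonpos (h : 0 < 1 + γ * z) (hz : z ≤ 0) {c : ℝ} (hc : 0 ≤ c)
    (hD : gevDGamma γ z ≤ log (gevU γ z) ^ 2 / 2 * c)
    (hzc : -z / (1 + γ * z) ≤ log (gevU γ z) * c) :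
    |gevScoreGammaStd γ z| ≤ gevU γ z * c * max (log (gevU γ z) ^ 2) (log (gevU γ z)) := by
  have hu : 1 ≤ gevU γ z := one_le_gevU h hz
  have hL : 0 ≤ log (gevU γ z) := log_nonneg hu
  have huc : 0 ≤ gevU γ z * c := mul_nonneg (by linarith) hc
  have hD₀ := gevDGamma_nonneg γ z
  rw [gevScoreGammaStd, ← abs_neg, show -((1 - gevU γ z) * gevDGamma γ z - z / (1 + γ * z)) =
    (gevU γ z - 1) * gevDGamma γ z - -z / (1 + γ * z) by ring]
  refine abs_sub_le_of_nonneg_of_le (mul_nonneg (by linarith) hD₀) ?_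
    (div_nonneg (by linarith) h.le) ?_
  · nlinarith [mul_le_mul_of_nonneg_left (le_max_left (log (gevU γ z) ^ 2) (log (gevU γ z))) huc]
  · nlinarith [mul_le_mul_of_nonneg_left (le_max_right (log (gevU γ z) ^ 2) (log (gevU γ z))) huc,
      mul_nonneg hL hc]

theorem abs_gevScoreGammaStd_le_of_nonneg_of_nonneg (hγ : 0 ≤ γ) (hz : 0 ≤ z) :
    |gevScoreGammaStd γ z| ≤
      max (min (z ^ 2 / 2) (if γ = 0 then z ^ 2 / 2 else γ⁻¹ ^ 2 * log (1 + γ * z)))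
        (min z (if γ = 0 then z else γ⁻¹)) := by
  have hγz : 0 ≤ γ * z := mul_nonneg hγ hz
  have h : 0 < 1 + γ * z := by linarith
  refine (abs_gevScoreGammaStd_le_max h hz).trans (max_le_max
    (le_min (gevDGamma_le_sq_div_two hγ hz) ?_) (le_min (div_le_self hz (by linarith)) ?_))
  · split_ifs with hγ0
    exacts [gevDGamma_le_sq_div_two hγ hz, gevDGamma_le_inv_sq_mul_log hγ0 hγz]
  · split_ifs with hγ0
    · exact div_le_self hz (by linarith)
    · rw [div_le_iff₀ h, mul_add, mul_one, inv_mul_cancel_left₀ hγ0]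
      linarith [inv_nonneg.2 hγ]

theorem abs_gevScoreGammaStd_le_max_sq_div (h : 0 < 1 + γ * z) (hz : 0 ≤ z) :
    |gevScoreGammaStd γ z| ≤ max (z ^ 2) z / (1 + γ * z) := by
  rw [← max_div_div_right h.le]
  exact (abs_gevScoreGammaStd_le_max h hz).trans (max_le_max_right _ (gevDGamma_le_sq_div h))

theorem abs_gevScoreGammaStd_le_of_nonneg_of_nonpos (h : 0 < 1 + γ * z) (hγ : 0 ≤ γ) (hz : z ≤ 0) :
    |gevScoreGammaStd γ z| ≤
      gevU γ z ^ (1 + γ) * max (log (gevU γ z) ^ 2) (log (gevU γ z)) := by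
  rw [rpow_add (gevU_pos h), rpow_one, gevU_rpow_self h]
  refine abs_gevScoreGammaStd_le_of_nonpos h hz (inv_nonneg.2 h.le)
    (gevDGamma_le_log_gevU_sq_mul_inv h (mul_nonpos_of_nonneg_of_nonpos hγ hz)) ?_
  rw [div_eq_mul_inv]
  exact mul_le_mul_of_nonneg_right (log_gevU_mem_Icc_of_nonneg hγ h).1 (inv_nonneg.2 h.le)

theorem abs_gevScoreGammaStd_le_of_nonpos_of_nonpos (h : 0 < 1 + γ * z) (hγ : γ ≤ 0) (hz : z ≤ 0) :
    |gevScoreGammaStd γ z| ≤ gevU γ z * max (log (gevU γ z) ^ 2) (log (gevU γ z)) := by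
  simpa using abs_gevScoreGammaStd_le_of_nonpos h hz zero_le_one
    (by simpa using gevDGamma_le_log_gevU_sq (mul_nonneg_of_nonpos_of_nonpos hγ hz))
    (by simpa using (log_gevU_mem_Icc_of_nonpos hγ h).1)

end

/-- For `γ = 0` the terms `γ⁻² log (1 + γz)` and `γ⁻¹` of case (i) are `+∞`; this is encoded by
replacing each of them with the other argument of its `min`. -/
theorem gevScoreGamma_bounds_general (γ μ σ : ℝ) (x : ℝ)
    (h : 0 < 1 + γ * ((x - μ) / σ)) :
    (0 ≤ γ → 0 ≤ (x - μ) / σ →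
      |gevScoreGamma γ μ σ x| ≤
        max (min (((x - μ) / σ) ^ 2 / 2)
              (if γ = 0 then ((x - μ) / σ) ^ 2 / 2
               else γ⁻¹ ^ 2 * Real.log (1 + γ * ((x - μ) / σ))))
            (min ((x - μ) / σ) (if γ = 0 then (x - μ) / σ else γ⁻¹))) ∧
    (γ ≤ 0 → 0 ≤ (x - μ) / σ →
      |gevScoreGamma γ μ σ x| ≤
        max (((x - μ) / σ) ^ 2) ((x - μ) / σ) / (1 + γ * ((x - μ) / σ))) ∧
    (0 ≤ γ → (x - μ) / σ ≤ 0 →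
      |gevScoreGamma γ μ σ x| ≤
        gevU γ ((x - μ) / σ) ^ (1 + γ) *
          max (Real.log (gevU γ ((x - μ) / σ)) ^ 2) (Real.log (gevU γ ((x - μ) / σ)))) ∧
    (γ ≤ 0 → (x - μ) / σ ≤ 0 →
      |gevScoreGamma γ μ σ x| ≤
        gevU γ ((x - μ) / σ) *
          max (Real.log (gevU γ ((x - μ) / σ)) ^ 2) (Real.log (gevU γ ((x - μ) / σ)))) := by
  simp only [gevScoreGamma_eq_gevScoreGammaStd]
  exact ⟨abs_gevScoreGammaStd_le_of_nonneg_of_nonneg,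
    fun _ ↦ abs_gevScoreGammaStd_le_max_sq_div h,
    abs_gevScoreGammaStd_le_of_nonneg_of_nonpos h,
    abs_gevScoreGammaStd_le_of_nonpos_of_nonpos h⟩

/-- **Bounds on the γ-score of the GEV log-density** for `σ > 0` and `1 + γz > 0`,
`z = (x − μ)/σ`, `u = u_γ(z)`.  In case (i) (`γ ≥ 0 ≤ z`) the quantities
`γ⁻² log(1 + γz)` and `γ⁻¹` are interpreted as `+∞` for `γ = 0`, which is encoded here
by replacing them by the other argument of the corresponding `min` when `γ = 0`. -/
theorem gevScoreGamma_bounds (γ μ σ : ℝ) (hσ : 0 < σ) (x : ℝ)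
    (h : 0 < 1 + γ * ((x - μ) / σ)) :
    (0 ≤ γ → 0 ≤ (x - μ) / σ →
      |gevScoreGamma γ μ σ x| ≤
        max (min (((x - μ) / σ) ^ 2 / 2)
              (if γ = 0 then ((x - μ) / σ) ^ 2 / 2
               else γ⁻¹ ^ 2 * Real.log (1 + γ * ((x - μ) / σ))))
            (min ((x - μ) / σ) (if γ = 0 then (x - μ) / σ else γ⁻¹))) ∧
    (γ ≤ 0 → 0 ≤ (x - μ) / σ →
      |gevScoreGamma γ μ σ x| ≤
        max (((x - μ) / σ) ^ 2) ((x - μ) / σ) / (1 + γ * ((x - μ) / σ))) ∧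
    (0 ≤ γ → (x - μ) / σ ≤ 0 →
      |gevScoreGamma γ μ σ x| ≤
        gevU γ ((x - μ) / σ) ^ (1 + γ) *
          max (Real.log (gevU γ ((x - μ) / σ)) ^ 2) (Real.log (gevU γ ((x - μ) / σ)))) ∧
    (γ ≤ 0 → (x - μ) / σ ≤ 0 →
      |gevScoreGamma γ μ σ x| ≤
        gevU γ ((x - μ) / σ) *
          max (Real.log (gevU γ ((x - μ) / σ)) ^ 2) (Real.log (gevU γ ((x - μ) / σ)))) :=
  gevScoreGamma_bounds_general γ μ σ x h
end

section
/- For any θ₀ = (γ₀, μ₀, σ₀) ∈ (−1/2, ∞) × ℝ × (0, ∞), the three-parameter GEV family satisfies P_{θ₀}(ℝ \ S̄(ε)) = o(ε²) as ε ↓ 0, where S̄(ε) = ⋂_{θ ∈ ℝ×ℝ×(0,∞), ‖θ−θ₀‖<ε} S_θ is the intersection of the supports S_θ = {x ∈ ℝ : σ + γ(x − μ) > 0} over all GEV parameters θ in the ε-ball around θ₀. -/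
open MeasureTheory Filter Set Asymptotics

/-- Lebesgue density of the GEV distribution with parameter `θ = (γ, μ, σ)`. -/
noncomputable def gevDensity (θ : ℝ × ℝ × ℝ) (x : ℝ) : ℝ :=
  if 0 < θ.2.2 + θ.1 * (x - θ.2.1) then
    (θ.2.2)⁻¹ * Real.exp (-(gevU θ.1 ((x - θ.2.1) / θ.2.2))) *
      gevU θ.1 ((x - θ.2.1) / θ.2.2) ^ (θ.1 + 1)
  else 0

/-- The GEV probability measure with parameter `θ`. -/
noncomputable def gevMeasure (θ : ℝ × ℝ × ℝ) : Measure ℝ :=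
  MeasureTheory.volume.withDensity fun x => ENNReal.ofReal (gevDensity θ x)

open Real Topology

/-!
Outside `S̄(ε)` some `θ` with `‖θ - θ₀‖ < ε` has `σ + γ (x - μ) ≤ 0`; comparing with `θ₀` gives
`t(x) := σ₀ + γ₀ (x - μ₀) < ε (1 + |γ₀| + ε + |x - μ₀|)`.

For `γ₀ ≠ 0` this confines `x` to the layer `0 < t(x) ≤ K ε` at the finite endpoint of the support,
of length `K ε / |γ₀|`, on which the density is `O(ε^q)` with `q > 1`: for `γ₀ < 0` it behaves like
`t^{-(1+γ₀)/γ₀}`, whose exponent exceeds `1` exactly when `γ₀ > -1/2`, and for `γ₀ > 0` the factor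
`e^{-u}` makes it vanish to any order. For `γ₀ = 0` the point `x` must lie at distance about `σ₀/ε`
from `μ₀`, where the Gumbel tails have mass `O(e^{-1/ε})`. Either way the mass is `O(ε^p)`, `p > 2`.
-/

lemma rpow_isLittleO_sq_nhdsGT_zero {p : ℝ} (hp : 2 < p) :
    (fun ε : ℝ => ε ^ p) =o[𝓝[>] 0] fun ε => ε ^ 2 := by
  have hpos : ∀ᶠ ε : ℝ in 𝓝[>] 0, 0 < ε := self_mem_nhdsWithin
  rw [isLittleO_iff_tendsto' (hpos.mono fun ε hε h => absurd h (by positivity))]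
  have hlim : Tendsto (fun ε : ℝ => ε ^ (p - 2)) (𝓝[>] 0) (𝓝 0) := by
    simpa [zero_rpow (by linarith : p - 2 ≠ 0)] using
      (continuousAt_rpow_const 0 (p - 2) (Or.inr (by linarith))).tendsto.mono_left
        nhdsWithin_le_nhds
  refine hlim.congr' (hpos.mono fun ε hε => ?_)
  show ε ^ (p - 2) = ε ^ p / ε ^ 2
  rw [rpow_sub hε, rpow_two]

lemma isLittleO_sq_of_le_ofReal_rpow {m : ℝ → ENNReal} {C p : ℝ} (hp : 2 < p)
    (h : ∀ᶠ ε in 𝓝[>] 0, m ε ≤ ENNReal.ofReal (C * ε ^ p)) :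
    (fun ε => (m ε).toReal) =o[𝓝[>] 0] fun ε => ε ^ 2 := by
  refine IsBigO.trans_isLittleO (IsBigO.of_bound |C| ?_) (rpow_isLittleO_sq_nhdsGT_zero hp)
  filter_upwards [h, self_mem_nhdsWithin] with ε hm (hε : 0 < ε)
  rw [norm_of_nonneg ENNReal.toReal_nonneg, norm_of_nonneg (rpow_nonneg hε.le _)]
  calc (m ε).toReal ≤ max (C * ε ^ p) 0 :=
        (ENNReal.toReal_mono ENNReal.ofReal_ne_top hm).trans_eq ENNReal.toReal_ofReal'
    _ ≤ |C| * ε ^ p :=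
        max_le (by gcongr; exact le_abs_self C) (by positivity)

lemma exp_neg_le_div_rpow {v k : ℝ} (hv : 0 < v) (hk : 0 ≤ k) : exp (-v) ≤ (k / v) ^ k := by
  rcases hk.eq_or_lt with rfl | hk
  · simpa using hv.le
  have hexp : (v / k) ^ k ≤ exp v :=
    calc (v / k) ^ k ≤ exp (v / k) ^ k := by
          gcongr
          linarith [add_one_le_exp (v / k)]
      _ = exp v := by rw [← exp_mul, div_mul_cancel₀ _ hk.ne']
  rw [exp_neg, ← inv_div, inv_rpow (by positivity)]
  exact inv_anti₀ (by positivity) hexp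

lemma withDensity_ofReal_le_ofReal_setIntegral {α : Type*} [MeasurableSpace α] {μ : Measure α}
    {f g : α → ℝ} {s : Set α} (hs : MeasurableSet s) (hg : IntegrableOn g s μ)
    (hg0 : ∀ x ∈ s, 0 ≤ g x) (hfg : ∀ x ∈ s, f x ≤ g x) :
    μ.withDensity (fun x => ENNReal.ofReal (f x)) s ≤ ENNReal.ofReal (∫ x in s, g x ∂μ) := by
  rw [withDensity_apply _ hs, ofReal_integral_eq_lintegral_ofReal hg
    ((ae_restrict_iff' hs).2 (Eventually.of_forall hg0))]
  exact setLIntegral_mono' hs fun x hx => ENNReal.ofReal_le_ofReal (hfg x hx)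

-- `S_θ` and `S̄(ε)` of the statement
def gevSupport (θ : ℝ × ℝ × ℝ) : Set ℝ :=
  {x | 0 < θ.2.2 + θ.1 * (x - θ.2.1)}

def gevSupportInter (θ₀ : ℝ × ℝ × ℝ) (ε : ℝ) : Set ℝ :=
  {x | ∀ θ : ℝ × ℝ × ℝ, 0 < θ.2.2 → ‖θ - θ₀‖ < ε → x ∈ gevSupport θ}

lemma measurableSet_gevSupport (θ : ℝ × ℝ × ℝ) : MeasurableSet (gevSupport θ) :=
  measurableSet_lt measurable_const (by fun_prop)

lemma gevDensity_of_notMem {θ : ℝ × ℝ × ℝ} {x : ℝ} (hx : x ∉ gevSupport θ) :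
    gevDensity θ x = 0 :=
  if_neg hx

lemma gevMeasure_le_mul_volume {θ : ℝ × ℝ × ℝ} {s : Set ℝ} {M : ℝ} (hs : MeasurableSet s)
    (hM : ∀ x ∈ s, x ∈ gevSupport θ → gevDensity θ x ≤ M) :
    gevMeasure θ s ≤ ENNReal.ofReal M * volume (gevSupport θ ∩ s) := by
  rw [gevMeasure, withDensity_apply _ hs, ← Measure.restrict_apply (measurableSet_gevSupport θ),
    ← lintegral_indicator_const (measurableSet_gevSupport θ)]
  refine setLIntegral_mono' hs fun x hx => ?_
  by_cases hxS : x ∈ gevSupport θ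
  · rw [indicator_of_mem hxS]
    exact ENNReal.ofReal_le_ofReal (hM x hx hxS)
  · simp [gevDensity_of_notMem hxS]

lemma volume_gevSupport_inter_setOf_le {γ μ σ L : ℝ} (hγ : γ ≠ 0) :
    volume (gevSupport (γ, μ, σ) ∩ {x | σ + γ * (x - μ) ≤ L}) = ENNReal.ofReal (L / |γ|) := by
  have hset : gevSupport (γ, μ, σ) ∩ {x | σ + γ * (x - μ) ≤ L} =
      (fun x => γ * x) ⁻¹' ((fun y => y + (σ - γ * μ)) ⁻¹' Ioc 0 L) := by
    ext x
    have : σ + γ * (x - μ) = γ * x + (σ - γ * μ) := by ring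
    simp only [gevSupport, mem_inter_iff, mem_ofPred_eq, mem_preimage, mem_Ioc, this]
  rw [hset, Real.volume_preimage_mul_left hγ, measure_preimage_add_right, Real.volume_Ioc,
    abs_inv, ← ENNReal.ofReal_mul (by positivity), sub_zero, inv_mul_eq_div]

lemma gevDensity_le_of_ne_zero {γ μ σ k x : ℝ} (hγ : γ ≠ 0) (hσ : 0 < σ) (hk : 0 ≤ k)
    (hx : 0 < σ + γ * (x - μ)) :
    gevDensity (γ, μ, σ) x ≤ σ⁻¹ * k ^ k * ((σ + γ * (x - μ)) / σ) ^ ((k - γ - 1) / γ) := by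
  set s := (σ + γ * (x - μ)) / σ with hs_def
  have hs : 0 < s := div_pos hx hσ
  set u := s ^ (-γ⁻¹)
  have hu : 0 < u := rpow_pos_of_pos hs _
  have hdens : gevDensity (γ, μ, σ) x = σ⁻¹ * (exp (-u) * u ^ (γ + 1)) := by
    have hz : 1 + γ * ((x - μ) / σ) = s := by rw [hs_def]; field_simp
    simp only [gevDensity, gevU, if_pos hx, if_neg hγ, hz, mul_assoc]
    rfl
  have hpow : u ^ (γ + 1 - k) = s ^ ((k - γ - 1) / γ) := by
    rw [← rpow_mul hs.le]
    congr 1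
    field_simp
    ring
  calc gevDensity (γ, μ, σ) x = σ⁻¹ * (exp (-u) * u ^ (γ + 1)) := hdens
    _ ≤ σ⁻¹ * ((k / u) ^ k * u ^ (γ + 1)) := by gcongr; exact exp_neg_le_div_rpow hu hk
    _ = σ⁻¹ * k ^ k * s ^ ((k - γ - 1) / γ) := by
        rw [div_rpow hk hu.le, ← hpow, rpow_sub hu]
        ring

lemma exists_gevDensity_le_rpow {γ μ σ : ℝ} (hγ : -(1 / 2) < γ) (hγ0 : γ ≠ 0) (hσ : 0 < σ) :
    ∃ C q : ℝ, 0 ≤ C ∧ 1 < q ∧ ∀ x, 0 < σ + γ * (x - μ) →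
      gevDensity (γ, μ, σ) x ≤ C * (σ + γ * (x - μ)) ^ q := by
  -- `k` is the exponent in `e^{-u} ≤ (k/u)^k`; for `γ < 0` the choice `k = 0` needs `γ > -1/2`
  obtain ⟨k, hk, hq⟩ : ∃ k : ℝ, 0 ≤ k ∧ 1 < (k - γ - 1) / γ := by
    rcases hγ0.lt_or_gt with hneg | hpos
    · exact ⟨0, le_rfl, by rw [lt_div_iff_of_neg hneg]; linarith⟩
    · exact ⟨3 * γ + 1, by linarith, by rw [lt_div_iff₀ hpos]; linarith⟩
  refine ⟨σ⁻¹ * k ^ k / σ ^ ((k - γ - 1) / γ), (k - γ - 1) / γ, by positivity, hq,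
    fun x hx => ?_⟩
  refine (gevDensity_le_of_ne_zero hγ0 hσ hk hx).trans_eq ?_
  rw [div_rpow hx.le hσ.le]
  ring

lemma gevMeasure_setOf_le_le {γ μ σ C q L : ℝ} (hγ : γ ≠ 0) (hC : 0 ≤ C) (hq : 0 ≤ q)
    (hL : 0 < L)
    (hdens : ∀ x, 0 < σ + γ * (x - μ) → gevDensity (γ, μ, σ) x ≤ C * (σ + γ * (x - μ)) ^ q) :
    gevMeasure (γ, μ, σ) {x | σ + γ * (x - μ) ≤ L} ≤ ENNReal.ofReal (C / |γ| * L ^ (q + 1)) := by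
  refine (gevMeasure_le_mul_volume (θ := (γ, μ, σ)) (s := {x | σ + γ * (x - μ) ≤ L})
    (M := C * L ^ q) (measurableSet_le (by fun_prop) (by fun_prop)) fun x hxL hx =>
      (hdens x hx).trans (mul_le_mul_of_nonneg_left (rpow_le_rpow hx.le hxL hq) hC)).trans_eq ?_
  rw [volume_gevSupport_inter_setOf_le hγ, ← ENNReal.ofReal_mul' (by positivity),
    rpow_add_one hL.ne']
  ring_nf

lemma lt_of_notMem_gevSupportInter {γ₀ μ₀ σ₀ ε x : ℝ}
    (hx : x ∉ gevSupportInter (γ₀, μ₀, σ₀) ε) :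
    σ₀ + γ₀ * (x - μ₀) < ε * (1 + |γ₀| + ε + |x - μ₀|) := by
  simp only [gevSupportInter, gevSupport, mem_ofPred_eq, not_forall, not_lt] at hx
  obtain ⟨⟨γ, μ, σ⟩, -, hθ, hx⟩ := hx
  dsimp only at hx
  have hγ : |γ - γ₀| < ε := (norm_fst_le _).trans_lt hθ
  have hμ : |μ - μ₀| < ε := ((norm_fst_le _).trans (norm_snd_le _)).trans_lt hθ
  have hσ : |σ - σ₀| < ε := ((norm_snd_le _).trans (norm_snd_le _)).trans_lt hθ
  have hsplit : σ₀ + γ₀ * (x - μ₀) =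
      (σ + γ * (x - μ)) + (σ₀ - σ) + (γ₀ - γ) * (x - μ₀) + γ * (μ - μ₀) := by ring
  have h₁ : σ₀ - σ < ε := by linarith [neg_abs_le (σ - σ₀)]
  have h₂ : (γ₀ - γ) * (x - μ₀) ≤ ε * |x - μ₀| := by
    refine (le_abs_self _).trans ?_
    rw [abs_mul, abs_sub_comm]
    exact mul_le_mul_of_nonneg_right hγ.le (abs_nonneg _)
  have h₃ : γ * (μ - μ₀) ≤ (|γ₀| + ε) * ε := by
    refine (le_abs_self _).trans ?_
    rw [abs_mul]
    have : |γ| ≤ |γ₀| + ε := by linarith [abs_sub_abs_le_abs_sub γ γ₀]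
    exact mul_le_mul this hμ.le (abs_nonneg _) (by linarith [abs_nonneg γ₀, abs_nonneg (μ - μ₀)])
  linarith

lemma le_of_notMem_gevSupportInter {γ₀ μ₀ σ₀ ε x : ℝ} (hγ : γ₀ ≠ 0) (hσ : 0 < σ₀)
    (hε0 : 0 < ε) (hε1 : ε ≤ 1) (hεγ : ε ≤ |γ₀| / 2) (hx : x ∉ gevSupportInter (γ₀, μ₀, σ₀) ε) :
    σ₀ + γ₀ * (x - μ₀) ≤ 2 * (2 * |γ₀| + |γ₀| ^ 2 + σ₀) / |γ₀| * ε := by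
  have h := lt_of_notMem_gevSupportInter hx
  set t := σ₀ + γ₀ * (x - μ₀) with ht_def
  have ha : 0 < |γ₀| := abs_pos.2 hγ
  rcases le_or_gt t 0 with ht | ht
  · exact ht.trans (by positivity)
  have hd : |γ₀| * |x - μ₀| ≤ t + σ₀ := by
    rw [← abs_mul, show γ₀ * (x - μ₀) = t - σ₀ by rw [ht_def]; ring]
    exact (abs_sub _ _).trans (by rw [abs_of_pos ht, abs_of_pos hσ])
  rw [div_mul_eq_mul_div, le_div_iff₀ ha]
  nlinarith [mul_lt_mul_of_pos_left h ha, mul_le_mul_of_nonneg_left hd hε0.le,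
    mul_le_mul_of_nonneg_right hεγ ht.le, mul_le_mul_of_nonneg_left hε1 (mul_pos ha hε0).le]

lemma exists_gevMeasure_compl_gevSupportInter_le_of_ne_zero {γ₀ μ₀ σ₀ : ℝ}
    (hγ : -(1 / 2) < γ₀) (hγ0 : γ₀ ≠ 0) (hσ : 0 < σ₀) :
    ∃ C p : ℝ, 2 < p ∧ ∀ᶠ ε in 𝓝[>] 0,
      gevMeasure (γ₀, μ₀, σ₀) (gevSupportInter (γ₀, μ₀, σ₀) ε)ᶜ ≤ ENNReal.ofReal (C * ε ^ p) := by
  obtain ⟨C, q, hC, hq, hdens⟩ := exists_gevDensity_le_rpow (μ := μ₀) hγ hγ0 hσ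
  set K := 2 * (2 * |γ₀| + |γ₀| ^ 2 + σ₀) / |γ₀|
  have ha : 0 < |γ₀| := abs_pos.2 hγ0
  refine ⟨C / |γ₀| * K ^ (q + 1), q + 1, by linarith, ?_⟩
  filter_upwards [Ioo_mem_nhdsGT (show (0 : ℝ) < min 1 (|γ₀| / 2) by positivity)]
    with ε ⟨hε0, hε⟩
  calc gevMeasure (γ₀, μ₀, σ₀) (gevSupportInter (γ₀, μ₀, σ₀) ε)ᶜ
      ≤ gevMeasure (γ₀, μ₀, σ₀) {x | σ₀ + γ₀ * (x - μ₀) ≤ K * ε} :=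
        measure_mono fun x hx => le_of_notMem_gevSupportInter hγ0 hσ hε0
          (hε.le.trans (min_le_left _ _)) (hε.le.trans (min_le_right _ _)) hx
    _ ≤ ENNReal.ofReal (C / |γ₀| * (K * ε) ^ (q + 1)) :=
        gevMeasure_setOf_le_le hγ0 hC (by linarith) (by positivity) hdens
    _ = ENNReal.ofReal (C / |γ₀| * K ^ (q + 1) * ε ^ (q + 1)) := by
        rw [mul_rpow (by positivity) hε0.le, mul_assoc]

lemma gevDensity_zero_eq {μ σ x : ℝ} (hσ : 0 < σ) :
    gevDensity (0, μ, σ) x = σ⁻¹ * (exp (-exp (-((x - μ) / σ))) * exp (-((x - μ) / σ))) := by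
  simp [gevDensity, gevU, hσ, mul_assoc]

lemma gevDensity_zero_le_exp_neg {μ σ x : ℝ} (hσ : 0 < σ) :
    gevDensity (0, μ, σ) x ≤ σ⁻¹ * exp (-((x - μ) / σ)) := by
  rw [gevDensity_zero_eq hσ]
  gcongr
  exact mul_le_of_le_one_left (exp_pos _).le (exp_le_one_iff.2 (neg_nonpos.2 (exp_pos _).le))

lemma gevDensity_zero_le_exp {μ σ x : ℝ} (hσ : 0 < σ) :
    gevDensity (0, μ, σ) x ≤ 4 * σ⁻¹ * exp ((x - μ) / σ) := by
  set w := exp (-((x - μ) / σ))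
  have hw : 0 < w := exp_pos _
  have hw' : exp ((x - μ) / σ) = w⁻¹ := by rw [← exp_neg, neg_neg]
  calc gevDensity (0, μ, σ) x = σ⁻¹ * (exp (-w) * w) := gevDensity_zero_eq hσ
    _ ≤ σ⁻¹ * ((2 / w) ^ (2 : ℝ) * w) := by
        gcongr
        exact exp_neg_le_div_rpow hw zero_le_two
    _ = 4 * σ⁻¹ * exp ((x - μ) / σ) := by
        rw [rpow_two, hw']
        field_simp
        ring

lemma gevMeasure_zero_Ioi_le {μ σ : ℝ} (hσ : 0 < σ) (R : ℝ) :
    gevMeasure (0, μ, σ) (Ioi (μ + R)) ≤ ENNReal.ofReal (exp (-(R / σ))) := by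
  have hsplit : ∀ x, σ⁻¹ * exp (-((x - μ) / σ)) = σ⁻¹ * exp (μ / σ) * exp (-σ⁻¹ * x) := by
    intro x
    rw [mul_assoc, ← exp_add]
    ring_nf
  have hneg : -σ⁻¹ < 0 := by simpa using hσ
  refine (withDensity_ofReal_le_ofReal_setIntegral measurableSet_Ioi
    ((integrableOn_exp_mul_Ioi hneg _).const_mul (σ⁻¹ * exp (μ / σ))) (fun _ _ => by positivity)
    fun x _ => (gevDensity_zero_le_exp_neg hσ).trans_eq (hsplit x)).trans_eq ?_
  have hexp : exp (μ / σ) * exp (-σ⁻¹ * (μ + R)) = exp (-(R / σ)) := by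
    rw [← exp_add]
    ring_nf
  rw [integral_const_mul, integral_exp_mul_Ioi hneg, neg_div_neg_eq, ← hexp]
  field_simp

lemma gevMeasure_zero_Iio_le {μ σ : ℝ} (hσ : 0 < σ) (R : ℝ) :
    gevMeasure (0, μ, σ) (Iio (μ - R)) ≤ ENNReal.ofReal (4 * exp (-(R / σ))) := by
  have hsplit : ∀ x, 4 * σ⁻¹ * exp ((x - μ) / σ) = 4 * σ⁻¹ * exp (-(μ / σ)) * exp (σ⁻¹ * x) := by
    intro x
    rw [mul_assoc _ (exp _), ← exp_add]
    ring_nf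
  have hpos : 0 < σ⁻¹ := inv_pos.2 hσ
  refine (measure_mono Iio_subset_Iic_self).trans <|
    (withDensity_ofReal_le_ofReal_setIntegral measurableSet_Iic
    ((integrableOn_exp_mul_Iic hpos _).const_mul (4 * σ⁻¹ * exp (-(μ / σ))))
    (fun _ _ => by positivity)
    fun x _ => (gevDensity_zero_le_exp hσ).trans_eq (hsplit x)).trans_eq ?_
  have hexp : exp (-(μ / σ)) * exp (σ⁻¹ * (μ - R)) = exp (-(R / σ)) := by
    rw [← exp_add]
    ring_nf
  rw [integral_const_mul, integral_exp_mul_Iic hpos, ← hexp]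
  field_simp

lemma gevMeasure_zero_tail_le {μ σ : ℝ} (hσ : 0 < σ) (R : ℝ) :
    gevMeasure (0, μ, σ) {x | R < |x - μ|} ≤ ENNReal.ofReal (5 * exp (-(R / σ))) := by
  have htail : {x | R < |x - μ|} ⊆ Iio (μ - R) ∪ Ioi (μ + R) := fun x (hx : R < |x - μ|) => by
    rcases lt_abs.1 hx with h | h
    · exact Or.inr (by simp only [mem_Ioi]; linarith)
    · exact Or.inl (by simp only [mem_Iio]; linarith)
  calc gevMeasure (0, μ, σ) {x | R < |x - μ|}
      ≤ gevMeasure (0, μ, σ) (Iio (μ - R)) + gevMeasure (0, μ, σ) (Ioi (μ + R)) :=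
        (measure_mono htail).trans (measure_union_le _ _)
    _ ≤ ENNReal.ofReal (4 * exp (-(R / σ))) + ENNReal.ofReal (exp (-(R / σ))) :=
        add_le_add (gevMeasure_zero_Iio_le hσ R) (gevMeasure_zero_Ioi_le hσ R)
    _ = ENNReal.ofReal (5 * exp (-(R / σ))) := by
        rw [← ENNReal.ofReal_add (by positivity) (by positivity)]
        ring_nf

lemma eventually_gevMeasure_compl_gevSupportInter_le_of_zero {μ₀ σ₀ : ℝ} (hσ : 0 < σ₀) :
    ∀ᶠ ε in 𝓝[>] 0, gevMeasure (0, μ₀, σ₀) (gevSupportInter (0, μ₀, σ₀) ε)ᶜ ≤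
      ENNReal.ofReal (135 * exp (2 / σ₀) * ε ^ (3 : ℝ)) := by
  filter_upwards [Ioo_mem_nhdsGT one_pos] with ε ⟨hε0, hε1⟩
  have hsub : (gevSupportInter (0, μ₀, σ₀) ε)ᶜ ⊆ {x | σ₀ / ε - 2 < |x - μ₀|} := fun x hx => by
    have h := lt_of_notMem_gevSupportInter hx
    rw [abs_zero, zero_mul, add_zero] at h
    show σ₀ / ε - 2 < |x - μ₀|
    rw [sub_lt_iff_lt_add, div_lt_iff₀ hε0]
    nlinarith
  have hexp : exp (-ε⁻¹) ≤ 27 * ε ^ (3 : ℝ) := by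
    refine (exp_neg_le_div_rpow (inv_pos.2 hε0) (by norm_num : (0 : ℝ) ≤ 3)).trans_eq ?_
    rw [div_inv_eq_mul, mul_rpow (by norm_num) hε0.le]
    norm_num
  calc gevMeasure (0, μ₀, σ₀) (gevSupportInter (0, μ₀, σ₀) ε)ᶜ
      ≤ ENNReal.ofReal (5 * exp (-((σ₀ / ε - 2) / σ₀))) :=
        (measure_mono hsub).trans (gevMeasure_zero_tail_le hσ _)
    _ ≤ ENNReal.ofReal (135 * exp (2 / σ₀) * ε ^ (3 : ℝ)) := by
        refine ENNReal.ofReal_le_ofReal ?_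
        have hsplit : exp (-((σ₀ / ε - 2) / σ₀)) = exp (2 / σ₀) * exp (-ε⁻¹) := by
          rw [← exp_add]
          field_simp
          ring_nf
        rw [hsplit]
        nlinarith [exp_pos (2 / σ₀)]

/-- **Support condition for the GEV family**: for `θ₀ = (γ₀, μ₀, σ₀)` with `γ₀ > −1/2`,
`σ₀ > 0`, `P_{θ₀}(ℝ \ S̄(ε)) = o(ε²)` as `ε ↓ 0`, where
`S̄(ε) = ⋂_{θ ∈ ℝ×ℝ×(0,∞), ‖θ−θ₀‖<ε} S_θ` with `S_θ = {x : σ + γ(x − μ) > 0}`. -/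
theorem gev_support_condition (θ₀ : ℝ × ℝ × ℝ) (hγ : -(1/2) < θ₀.1) (hσ : 0 < θ₀.2.2) :
    (fun ε : ℝ =>
        (gevMeasure θ₀
          {x : ℝ | ∀ θ : ℝ × ℝ × ℝ, 0 < θ.2.2 → ‖θ - θ₀‖ < ε →
            0 < θ.2.2 + θ.1 * (x - θ.2.1)}ᶜ).toReal)
      =o[nhdsWithin 0 (Set.Ioi 0)] fun ε => ε ^ 2 := by
  obtain ⟨γ₀, μ₀, σ₀⟩ := θ₀
  obtain ⟨C, p, hp, hle⟩ : ∃ C p : ℝ, 2 < p ∧ ∀ᶠ ε in 𝓝[>] 0,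
      gevMeasure (γ₀, μ₀, σ₀) (gevSupportInter (γ₀, μ₀, σ₀) ε)ᶜ ≤ ENNReal.ofReal (C * ε ^ p) := by
    rcases eq_or_ne γ₀ 0 with rfl | hγ0
    · exact ⟨_, 3, by norm_num, eventually_gevMeasure_compl_gevSupportInter_le_of_zero hσ⟩
    · exact exists_gevMeasure_compl_gevSupportInter_le_of_ne_zero hγ hγ0 hσ
  exact isLittleO_sq_of_le_ofReal_rpow hp hle
end
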